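/- Let u : EuclideanSpace ℝ (Fin 3) → ℝ be twice continuously differentiable and harmonic on an open set Ω, with ∇u(p) ≠ 0 for all p ∈ Ω. Let φ : ℝ → EuclideanSpace ℝ (Fin 3) map an interval [0, L] into Ω and satisfy φ'(s) = N(φ(s)) for all s ∈ [0, L], where N(p) = ∇u(p)/‖∇u(p)‖. Then for every s ∈ [0, L], ‖∇u(φ(s))‖ = ‖∇u(φ(0))‖ · exp(2 ∫₀ˢ H(φ(t)) dt), where H(p) = (Q(p)(N(p), N(p)) − Δu(p)) / (2‖∇u(p)‖). -/

import Mathlib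

/-! Along the normalized gradient flow `φ' = N`, the chain rule gives
`d/dt ‖∇u(φ)‖ = Q(N, N)`, and for harmonic `u` this equals `‖∇u‖ · 2H`. Hence
`log ‖∇u(φ)‖` has derivative `2H(φ)`, and the fundamental theorem of calculus integrates it. -/

open Set

/-- The Hessian bilinear form of `u` at `p`, applied to `(v, w)`. -/
noncomputable def hessianForm (u : EuclideanSpace ℝ (Fin 3) → ℝ)
    (p v w : EuclideanSpace ℝ (Fin 3)) : ℝ :=
  fderiv ℝ (fderiv ℝ u) p v w

/-- The Laplacian of `u` at `p`: the trace of the Hessian. -/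
noncomputable def laplacianAt (u : EuclideanSpace ℝ (Fin 3) → ℝ)
    (p : EuclideanSpace ℝ (Fin 3)) : ℝ :=
  ∑ i, hessianForm u p (EuclideanSpace.single i 1) (EuclideanSpace.single i 1)

/-- The unit normal `N(p) = ∇u(p)/‖∇u(p)‖`. -/
noncomputable def unitNormal (u : EuclideanSpace ℝ (Fin 3) → ℝ)
    (p : EuclideanSpace ℝ (Fin 3)) : EuclideanSpace ℝ (Fin 3) :=
  ‖gradient u p‖⁻¹ • gradient u p

/-- The mean curvature `H(p) = (Q(p)(N,N) − Δu(p)) / (2‖∇u(p)‖)` of the level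
surface of `u` through `p`. -/
noncomputable def meanCurvature (u : EuclideanSpace ℝ (Fin 3) → ℝ)
    (p : EuclideanSpace ℝ (Fin 3)) : ℝ :=
  (hessianForm u p (unitNormal u p) (unitNormal u p) - laplacianAt u p) /
    (2 * ‖gradient u p‖)

open Real InnerProductSpace
open scoped RealInnerProductSpace

theorem HasDerivAt.norm {F : Type*} [NormedAddCommGroup F] [InnerProductSpace ℝ F]
    {f : ℝ → F} {f' : F} {x : ℝ} (hf : HasDerivAt f f' x) (h0 : f x ≠ 0) :
    HasDerivAt (‖f ·‖) (⟪f x, f'⟫ / ‖f x‖) x := by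
  have hsq : ‖f x‖ ^ 2 ≠ 0 := by positivity
  convert hf.norm_sq.sqrt hsq using 1
  · simp [sqrt_sq (norm_nonneg _)]
  · rw [sqrt_sq (norm_nonneg _)]
    ring

section Gradient

variable {F : Type*} [NormedAddCommGroup F] [InnerProductSpace ℝ F] [CompleteSpace F]
  {u : F → ℝ}

theorem ContDiffOn.continuousOn_gradient_of_isOpen {Ω : Set F} {n : WithTop ℕ∞}
    (hu : ContDiffOn ℝ n u Ω) (hΩ : IsOpen Ω) (hn : 1 ≤ n) : ContinuousOn (gradient u) Ω :=
  (toDual ℝ F).symm.continuous.comp_continuousOn (hu.continuousOn_fderiv_of_isOpen hΩ hn)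

theorem hasDerivAt_gradient_comp {φ : ℝ → F} {v : F} {t : ℝ}
    (hu : DifferentiableAt ℝ (fderiv ℝ u) (φ t)) (hφ : HasDerivAt φ v t) :
    HasDerivAt (fun τ => gradient u (φ τ))
      ((toDual ℝ F).symm (fderiv ℝ (fderiv ℝ u) (φ t) v)) t :=
  (toDual ℝ F).symm.hasFDerivAt.comp_hasDerivAt t (hu.hasFDerivAt.comp_hasDerivAt t hφ)

theorem hasDerivAt_norm_gradient_comp {φ : ℝ → F} {v : F} {t : ℝ}
    (hu : DifferentiableAt ℝ (fderiv ℝ u) (φ t)) (hφ : HasDerivAt φ v t)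
    (hgrad : gradient u (φ t) ≠ 0) :
    HasDerivAt (fun τ => ‖gradient u (φ τ)‖)
      (fderiv ℝ (fderiv ℝ u) (φ t) v (‖gradient u (φ t)‖⁻¹ • gradient u (φ t))) t := by
  convert (hasDerivAt_gradient_comp hu hφ).norm hgrad using 1
  rw [real_inner_comm, toDual_symm_apply, map_smul, smul_eq_mul, div_eq_inv_mul]

end Gradient

theorem eq_mul_exp_integral_of_hasDerivAt {g h : ℝ → ℝ} {a b : ℝ} (hab : a ≤ b)
    (hg : ∀ t ∈ Icc a b, 0 < g t) (hderiv : ∀ t ∈ Icc a b, HasDerivAt g (g t * h t) t)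
    (hh : ContinuousOn h (Icc a b)) :
    g b = g a * exp (∫ t in a..b, h t) := by
  have hlog : ∀ t ∈ uIcc a b, HasDerivAt (fun τ => log (g τ)) (h t) t := by
    intro t ht
    rw [uIcc_of_le hab] at ht
    convert (hderiv t ht).log (hg t ht).ne' using 1
    field_simp [(hg t ht).ne']
  rw [intervalIntegral.integral_eq_sub_of_hasDerivAt hlog (hh.intervalIntegrable_of_Icc hab),
    exp_sub, exp_log (hg b ⟨hab, le_rfl⟩), exp_log (hg a ⟨le_rfl, hab⟩)]
  field_simp [(hg a ⟨le_rfl, hab⟩).ne']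

theorem hessianForm_unitNormal_eq_of_laplacianAt_eq_zero {u : EuclideanSpace ℝ (Fin 3) → ℝ}
    {p : EuclideanSpace ℝ (Fin 3)} (hharm : laplacianAt u p = 0) (hgrad : gradient u p ≠ 0) :
    hessianForm u p (unitNormal u p) (unitNormal u p) =
      ‖gradient u p‖ * (2 * meanCurvature u p) := by
  have : ‖gradient u p‖ ≠ 0 := norm_ne_zero_iff.mpr hgrad
  rw [meanCurvature, hharm, sub_zero]
  field_simp

theorem ContDiffOn.continuousOn_meanCurvature {u : EuclideanSpace ℝ (Fin 3) → ℝ}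
    {Ω : Set (EuclideanSpace ℝ (Fin 3))} (hΩ : IsOpen Ω) (hu : ContDiffOn ℝ 2 u Ω)
    (hgrad : ∀ p ∈ Ω, gradient u p ≠ 0) : ContinuousOn (meanCurvature u) Ω := by
  have hnorm : ∀ p ∈ Ω, ‖gradient u p‖ ≠ 0 := fun p hp => norm_ne_zero_iff.mpr (hgrad p hp)
  have hD2 : ContinuousOn (fderiv ℝ (fderiv ℝ u)) Ω :=
    (hu.fderiv_of_isOpen hΩ (by norm_num)).continuousOn_fderiv_of_isOpen hΩ le_rfl
  have hgradc := hu.continuousOn_gradient_of_isOpen hΩ (by norm_num)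
  have hN : ContinuousOn (unitNormal u) Ω := (hgradc.norm.inv₀ hnorm).smul hgradc
  refine ContinuousOn.div ?_ (continuousOn_const.mul hgradc.norm) fun p hp => by
    simpa using hnorm p hp
  refine ((hD2.clm_apply hN).clm_apply hN).sub (continuousOn_finsetSum _ fun i _ => ?_)
  exact (hD2.clm_apply continuousOn_const).clm_apply continuousOn_const

theorem gradient_norm_eq_exp_integral_meanCurvature_dim3
    (u : EuclideanSpace ℝ (Fin 3) → ℝ)
    (Ω : Set (EuclideanSpace ℝ (Fin 3))) (hΩ : IsOpen Ω)
    (hu : ContDiffOn ℝ 2 u Ω)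
    (hharm : ∀ p ∈ Ω, laplacianAt u p = 0)
    (hgrad : ∀ p ∈ Ω, gradient u p ≠ 0)
    (φ : ℝ → EuclideanSpace ℝ (Fin 3)) (L : ℝ)
    (hmap : ∀ s ∈ Icc (0 : ℝ) L, φ s ∈ Ω)
    (hflow : ∀ s ∈ Icc (0 : ℝ) L, HasDerivAt φ (unitNormal u (φ s)) s)
    (s : ℝ) (hs : s ∈ Icc (0 : ℝ) L) :
    ‖gradient u (φ s)‖ = ‖gradient u (φ 0)‖ *
      Real.exp (2 * ∫ t in (0 : ℝ)..s, meanCurvature u (φ t)) := by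
  have hsub : Icc 0 s ⊆ Icc 0 L := Icc_subset_Icc_right hs.2
  have hD2 : ∀ p ∈ Ω, DifferentiableAt ℝ (fderiv ℝ u) p := fun p hp =>
    ((hu.fderiv_of_isOpen hΩ le_rfl).contDiffAt (hΩ.mem_nhds hp)).differentiableAt one_ne_zero
  have hderiv : ∀ t ∈ Icc 0 s, HasDerivAt (fun τ => ‖gradient u (φ τ)‖)
      (‖gradient u (φ t)‖ * (2 * meanCurvature u (φ t))) t := fun t ht => by
    have hp := hmap t (hsub ht)
    rw [← hessianForm_unitNormal_eq_of_laplacianAt_eq_zero (hharm _ hp) (hgrad _ hp)]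
    exact hasDerivAt_norm_gradient_comp (hD2 _ hp) (hflow t (hsub ht)) (hgrad _ hp)
  have hcont : ContinuousOn (fun t => 2 * meanCurvature u (φ t)) (Icc 0 s) :=
    continuousOn_const.mul ((hu.continuousOn_meanCurvature hΩ hgrad).comp
      (fun t ht => (hflow t (hsub ht)).continuousAt.continuousWithinAt)
      fun t ht => hmap t (hsub ht))
  rw [← intervalIntegral.integral_const_mul]
  exact eq_mul_exp_integral_of_hasDerivAt hs.1
    (fun t ht => norm_pos_iff.mpr (hgrad _ (hmap t (hsub ht)))) hderiv hcont
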